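/- arXiv:1309.5996 — 2 statements merged into one kernel-verified Lean document; each statement's English description precedes it below -/
import Mathlib

section
/- Let f : S → E be a strictly increasing function from a set S of epsilon numbers into the epsilon numbers, and let x be an ordinal with Ep(x) ⊆ S. Then Ep(ω^x) ⊆ S and (ω^x)[f] = ω^{x[f]}. -/
open Ordinal

/-- An ordinal is an epsilon number if it is a fixed point of `ω ^ ·`. -/
def IsEpsilon (x : Ordinal.{0}) : Prop := ω ^ x = x

theorem cnf_fst_lt {x : Ordinal.{0}} (h : ¬ ω ^ x = x) {p : Ordinal × Ordinal}
    (hp : p ∈ CNF ω x) : p.1 < x := by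
  have hx : x ≠ 0 := by
    rintro rfl
    simp [Ordinal.CNF.zero_right] at hp
  have h1 : p.1 ≤ Ordinal.log ω x := Ordinal.CNF.fst_le_log hp
  have h2 : Ordinal.log ω x < x := by
    rcases lt_or_eq_of_le (Ordinal.log_le_self ω x) with h' | h'
    · exact h'
    · exfalso
      have hle := Ordinal.opow_log_le_self ω hx
      rw [h'] at hle
      exact h (le_antisymm hle (Ordinal.right_le_opow x one_lt_omega0))
  exact lt_of_le_of_lt h1 h2

open scoped Classical in
/-- The set of epsilon numbers occurring hereditarily in the Cantor normal form of `x`. -/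
noncomputable def Ep (x : Ordinal.{0}) : Set Ordinal.{0} :=
  if h : ω ^ x = x then {x}
  else ⋃ p : {q // q ∈ CNF ω x}, Ep p.1.1
termination_by x
decreasing_by exact cnf_fst_lt h p.2

open scoped Classical in
/-- Simultaneous substitution of the epsilon numbers occurring hereditarily in the
Cantor normal form of `x` by their values under `f`. -/
noncomputable def subst (f : Ordinal.{0} → Ordinal.{0}) (x : Ordinal.{0}) : Ordinal.{0} :=
  if h : ω ^ x = x then f x
  else (((CNF ω x).attach).map (fun p => ω ^ subst f p.1.1 * p.1.2)).sum
termination_by x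
decreasing_by exact cnf_fst_lt h p.2

/-! If `x` is an epsilon number then `ω ^ x = x`, and the claim reduces to `f x` being one. Otherwise
`ω ^ x` is not an epsilon number either and its Cantor normal form is the single term `ω ^ x * 1`,
so both `Ep` and the substitution pass through `ω ^ ·` to `x`. -/

namespace Ordinal

theorem CNF.opow {b : Ordinal} (hb : 1 < b) (e : Ordinal) : CNF b (b ^ e) = [(e, 1)] := by
  simpa using CNF.opow_mul_add hb one_ne_zero hb (opow_pos e (zero_lt_one.trans hb))

end Ordinal

theorem isEpsilon_omega0_opow_iff {x : Ordinal} : IsEpsilon (ω ^ x) ↔ IsEpsilon x :=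
  opow_right_inj one_lt_omega0

theorem Ep_of_isEpsilon {x : Ordinal} (hx : IsEpsilon x) : Ep x = {x} := by
  rw [Ep, dif_pos (show ω ^ x = x from hx)]

theorem subst_of_isEpsilon (f : Ordinal → Ordinal) {x : Ordinal} (hx : IsEpsilon x) :
    subst f x = f x := by
  rw [subst, dif_pos (show ω ^ x = x from hx)]

theorem Ep_omega0_opow_of_not_isEpsilon {x : Ordinal} (hx : ¬ IsEpsilon x) :
    Ep (ω ^ x) = Ep x := by
  have hωx : ¬ IsEpsilon (ω ^ x) := isEpsilon_omega0_opow_iff.not.mpr hx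
  rw [Ep, dif_neg (show ¬ ω ^ ω ^ x = ω ^ x from hωx)]
  ext a
  simp only [Set.mem_iUnion, Subtype.exists, CNF.opow one_lt_omega0, List.mem_singleton,
    exists_prop, exists_eq_left]

theorem subst_omega0_opow_of_not_isEpsilon (f : Ordinal → Ordinal) {x : Ordinal}
    (hx : ¬ IsEpsilon x) : subst f (ω ^ x) = ω ^ subst f x := by
  have hωx : ¬ IsEpsilon (ω ^ x) := isEpsilon_omega0_opow_iff.not.mpr hx
  rw [subst, dif_neg (show ¬ ω ^ ω ^ x = ω ^ x from hωx),
    List.attach_map_val (l := CNF ω (ω ^ x)) (f := fun q => ω ^ subst f q.1 * q.2),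
    CNF.opow one_lt_omega0]
  simp

theorem stmt9_general (S : Set Ordinal.{0}) (f : Ordinal → Ordinal)
    (hfE : ∀ e ∈ S, IsEpsilon (f e))
    (x : Ordinal) (hx : Ep x ⊆ S) :
    Ep (ω ^ x) ⊆ S ∧ subst f (ω ^ x) = ω ^ subst f x := by
  by_cases hεx : IsEpsilon x
  · have hxS : x ∈ S := hx (by simp [Ep_of_isEpsilon hεx])
    rw [show ω ^ x = x from hεx, subst_of_isEpsilon f hεx, hfE x hxS]
    exact ⟨hx, rfl⟩
  · exact ⟨(Ep_omega0_opow_of_not_isEpsilon hεx).symm ▸ hx,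
      subst_omega0_opow_of_not_isEpsilon f hεx⟩

theorem stmt9 (S : Set Ordinal.{0}) (f : Ordinal → Ordinal)
    (hS : ∀ e ∈ S, IsEpsilon e) (hfE : ∀ e ∈ S, IsEpsilon (f e))
    (hf : StrictMonoOn f S)
    (x : Ordinal) (hx : Ep x ⊆ S) :
    Ep (ω ^ x) ⊆ S ∧ subst f (ω ^ x) = ω ^ subst f x :=
  stmt9_general S f hfE x hx
end

section
/- Let f : S → E be a strictly increasing function from a set of epsilon numbers into the epsilon numbers, and let y be an ordinal with Ep(y) ⊆ S. Then y is additively principal but not an epsilon number if and only if y[f] is additively principal but not an epsilon number. -/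
open Ordinal

/-! On ordinals whose hereditary epsilon numbers lie in `S`, the substitution `y ↦ y[f]` is
strictly increasing and commutes with the leading exponent: `log ω (y[f]) = (log ω y)[f]`.
The two facts are proved together by induction on `y`, comparing Cantor normal forms
lexicographically; monotonicity of `f` enters when the larger ordinal is an epsilon number.

A nonzero `y` is additively principal iff `y = ω ^ log ω y`, i.e. its normal form
`ω ^ log ω y * c + r` has `c = 1` and `r = 0`, and since `y[f] = ω ^ (log ω y)[f] * c + r[f]`
with `r[f] = 0 ↔ r = 0` this property is preserved both ways. Epsilon numbers are sent to
epsilon numbers, and a non-epsilon `y` has `log ω y < y`, so `log ω (y[f]) < y[f]`. -/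

namespace IsEpsilon

variable {x : Ordinal.{0}}

theorem ne_zero (h : IsEpsilon x) : x ≠ 0 := by
  rintro rfl
  simp [IsEpsilon] at h

theorem log_eq (h : IsEpsilon x) : log ω x = x := by
  nth_rw 1 [← show ω ^ x = x from h]
  exact log_opow one_lt_omega0 x

theorem CNF_eq (h : IsEpsilon x) : CNF ω x = [(x, 1)] := by
  rw [CNF.ne_zero h.ne_zero, h.log_eq, show ω ^ x = x from h, Ordinal.div_self h.ne_zero,
    Ordinal.mod_self, CNF.zero_right]

theorem Ep_eq (h : IsEpsilon x) : Ep x = {x} := by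
  rw [Ep, dif_pos (show ω ^ x = x from h)]

theorem subst_eq (h : IsEpsilon x) (f : Ordinal → Ordinal) : subst f x = f x := by
  rw [subst, dif_pos (show ω ^ x = x from h)]

theorem mem_of_Ep_subset {S : Set Ordinal} (h : IsEpsilon x) (hxS : Ep x ⊆ S) : x ∈ S :=
  hxS (h.Ep_eq ▸ rfl)

end IsEpsilon

section Arithmetic

variable {a b c d u v x z : Ordinal}

theorem log_omega0_lt_self (hx : x ≠ 0) (h : ¬IsEpsilon x) : log ω x < x :=
  (log_le_self ω x).lt_of_ne fun heq => by
    have hle := opow_log_le_self ω hx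
    rw [heq] at hle
    exact h (le_antisymm hle (right_le_opow x one_lt_omega0))

theorem lt_of_log_lt_log (h : log b x < log b z) : x < z :=
  lt_of_not_ge fun hzx => (log_mono_right b hzx).not_gt h

theorem isPrincipal_add_iff_omega0_opow_log_eq (hx : x ≠ 0) :
    IsPrincipal (· + ·) x ↔ ω ^ log ω x = x := by
  refine ⟨fun hp => ?_, fun h => h ▸ isPrincipal_add_omega0_opow _⟩
  obtain h0 | ⟨a, rfl⟩ := isPrincipal_add_iff_zero_or_omega0_opow.1 hp
  · exact absurd h0 hx
  · rw [log_opow one_lt_omega0]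

theorem opow_mul_add_lt_opow_mul_add (hu : u < b ^ a) (h : d < c ∨ d = c ∧ u < v) :
    b ^ a * d + u < b ^ a * c + v := by
  obtain hdc | ⟨rfl, huv⟩ := h
  · calc b ^ a * d + u < b ^ a * d + b ^ a := add_lt_add_right hu _
      _ = b ^ a * Order.succ d := (mul_succ _ _).symm
      _ ≤ b ^ a * c := mul_le_mul_right (Order.succ_le_of_lt hdc) _
      _ ≤ b ^ a * c + v := le_self_add
  · exact add_lt_add_right huv _

theorem opow_mul_add_eq_opow_iff (hb : b ≠ 0) (hc : c ≠ 0) :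
    b ^ a * c + u = b ^ a ↔ c = 1 ∧ u = 0 := by
  refine ⟨fun h => ?_, fun ⟨hc1, hu⟩ => by rw [hc1, hu, mul_one, add_zero]⟩
  have hpos : 0 < b ^ a := opow_pos a (pos_iff_ne_zero.2 hb)
  have hc1 : c = 1 := by
    refine le_antisymm ?_ (Order.one_le_iff_pos.2 (pos_iff_ne_zero.2 hc))
    refine le_of_mul_le_mul_left ?_ hpos
    rw [mul_one]
    exact le_self_add.trans_eq h
  refine ⟨hc1, ?_⟩
  rw [hc1, mul_one] at h
  exact add_eq_left.1 h

theorem div_lt_div_or_mod_lt (h : x < z) (d : Ordinal) :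
    x / d < z / d ∨ x / d = z / d ∧ x % d < z % d := by
  refine (div_le_left h.le d).lt_or_eq.imp_right fun heq => ⟨heq, lt_of_not_ge fun hmod => ?_⟩
  have := add_le_add_right hmod (d * (z / d))
  rw [div_add_mod, ← heq, div_add_mod] at this
  exact h.not_ge this

end Arithmetic

section Subst

variable {S : Set Ordinal.{0}} {f : Ordinal → Ordinal} {x : Ordinal}

theorem Ep_subset_of_mem_CNF (hx : ¬IsEpsilon x) {p : Ordinal × Ordinal} (hp : p ∈ CNF ω x) :
    Ep p.1 ⊆ Ep x := by
  rw [Ep.eq_def x, dif_neg (show ¬ω ^ x = x from hx)]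
  exact Set.subset_iUnion (fun q : {q // q ∈ CNF ω x} => Ep q.1.1) ⟨p, hp⟩

theorem Ep_subset_of_forall_mem_CNF {y : Ordinal} (hx : ¬IsEpsilon x)
    (hyx : ∀ p ∈ CNF ω y, p ∈ CNF ω x) : Ep y ⊆ Ep x := by
  by_cases hy : IsEpsilon y
  · exact Ep_subset_of_mem_CNF hx (hyx (y, 1) (by simp [hy.CNF_eq]))
  · rw [Ep.eq_def y, dif_neg (show ¬ω ^ y = y from hy)]
    exact Set.iUnion_subset fun p => Ep_subset_of_mem_CNF hx (hyx _ p.2)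

theorem Ep_log_subset (x : Ordinal) : Ep (log ω x) ⊆ Ep x := by
  by_cases hx : IsEpsilon x
  · rw [hx.log_eq]
  rcases eq_or_ne x 0 with rfl | hx0
  · rw [log_zero_right]
  exact Ep_subset_of_mem_CNF hx (p := (log ω x, x / ω ^ log ω x)) (by simp [CNF.ne_zero hx0])

theorem Ep_zero : Ep 0 = ∅ := by
  rw [Ep.eq_def, dif_neg (by simp)]
  simp [CNF.zero_right]

theorem Ep_mod_subset (x : Ordinal) : Ep (x % ω ^ log ω x) ⊆ Ep x := by
  by_cases hx : IsEpsilon x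
  · rw [hx.log_eq, show ω ^ x = x from hx, Ordinal.mod_self, Ep_zero]
    exact Set.empty_subset _
  refine Ep_subset_of_forall_mem_CNF hx fun p hp => ?_
  rcases eq_or_ne x 0 with rfl | hx0
  · simp at hp
  · rw [CNF.ne_zero hx0]
    exact List.mem_cons_of_mem _ hp

theorem subst_zero (f : Ordinal → Ordinal) : subst f 0 = 0 := by
  rw [subst, dif_neg (by simp), CNF.zero_right]
  rfl

theorem subst_of_not_isEpsilon (f : Ordinal → Ordinal) (hx : ¬IsEpsilon x) :
    subst f x = ((CNF ω x).map fun p => ω ^ subst f p.1 * p.2).sum := by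
  rw [subst, dif_neg (show ¬ω ^ x = x from hx)]
  exact congrArg List.sum
    (List.attach_map_val (f := fun p : Ordinal × Ordinal => ω ^ subst f p.1 * p.2))

theorem subst_eq_sum_CNF (hfE : ∀ e ∈ S, IsEpsilon (f e)) (hxS : Ep x ⊆ S) :
    subst f x = ((CNF ω x).map fun p => ω ^ subst f p.1 * p.2).sum := by
  by_cases hx : IsEpsilon x
  · simp [hx.CNF_eq, hx.subst_eq, show ω ^ f x = f x from hfE x (hx.mem_of_Ep_subset hxS)]
  · exact subst_of_not_isEpsilon f hx

theorem subst_eq_omega0_opow_mul_add (hfE : ∀ e ∈ S, IsEpsilon (f e)) (hxS : Ep x ⊆ S) :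
    subst f x = ω ^ subst f (log ω x) * (x / ω ^ log ω x) + subst f (x % ω ^ log ω x) := by
  rcases eq_or_ne x 0 with rfl | hx0
  · simp [subst_zero]
  rw [subst_eq_sum_CNF hfE hxS, CNF.ne_zero hx0, List.map_cons, List.sum_cons,
    subst_eq_sum_CNF hfE ((Ep_mod_subset x).trans hxS)]

theorem subst_pos (hfE : ∀ e ∈ S, IsEpsilon (f e)) (hxS : Ep x ⊆ S) (hx0 : x ≠ 0) :
    0 < subst f x := by
  rw [subst_eq_omega0_opow_mul_add hfE hxS]
  exact (mul_pos (opow_pos _ omega0_pos) (div_opow_log_pos ω hx0)).trans_le le_self_add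

theorem subst_eq_zero_iff (hfE : ∀ e ∈ S, IsEpsilon (f e)) (hxS : Ep x ⊆ S) :
    subst f x = 0 ↔ x = 0 :=
  ⟨fun h => by_contra fun hx0 => (subst_pos hfE hxS hx0).ne' h, by rintro rfl; exact subst_zero f⟩

theorem omega0_opow_subst_log_eq_subst_iff (hfE : ∀ e ∈ S, IsEpsilon (f e)) (hxS : Ep x ⊆ S)
    (hx0 : x ≠ 0) : ω ^ subst f (log ω x) = subst f x ↔ ω ^ log ω x = x := by
  have hc := (div_opow_log_pos ω hx0).ne'
  have hx := opow_mul_add_eq_opow_iff (a := log ω x) (u := x % ω ^ log ω x) omega0_ne_zero hc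
  rw [div_add_mod] at hx
  rw [eq_comm, subst_eq_omega0_opow_mul_add hfE hxS, opow_mul_add_eq_opow_iff omega0_ne_zero hc,
    subst_eq_zero_iff hfE ((Ep_mod_subset x).trans hxS), ← hx, eq_comm]

theorem log_subst_of_isEpsilon (hfE : ∀ e ∈ S, IsEpsilon (f e)) (hx : IsEpsilon x)
    (hxS : Ep x ⊆ S) : log ω (subst f x) = subst f (log ω x) := by
  rw [hx.log_eq, hx.subst_eq, (hfE x (hx.mem_of_Ep_subset hxS)).log_eq]

theorem subst_lt_omega0_opow_subst {w b : Ordinal} (hwS : Ep w ⊆ S) (hw : w < ω ^ b)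
    (hlog : log ω (subst f w) = subst f (log ω w))
    (hmono : ∀ x < b, Ep x ⊆ S → subst f x < subst f b) : subst f w < ω ^ subst f b := by
  rcases eq_or_ne w 0 with rfl | hw0
  · rw [subst_zero]
    exact opow_pos _ omega0_pos
  refine lt_opow_of_log_lt one_lt_omega0 (hlog ▸ hmono _ ?_ ((Ep_log_subset w).trans hwS))
  exact (lt_opow_iff_log_lt one_lt_omega0 hw0).1 hw

theorem log_subst_of_ne_zero (hfE : ∀ e ∈ S, IsEpsilon (f e)) (hxS : Ep x ⊆ S) (hx0 : x ≠ 0)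
    (hlog : log ω (subst f (x % ω ^ log ω x)) = subst f (log ω (x % ω ^ log ω x)))
    (hmono : ∀ y < log ω x, Ep y ⊆ S → subst f y < subst f (log ω x)) :
    log ω (subst f x) = subst f (log ω x) := by
  have hr := subst_lt_omega0_opow_subst ((Ep_mod_subset x).trans hxS)
    (mod_lt x (opow_ne_zero _ omega0_ne_zero)) hlog hmono
  rw [subst_eq_omega0_opow_mul_add hfE hxS,
    log_opow_mul_add one_lt_omega0 (div_opow_log_pos ω hx0).ne' hr,
    log_eq_zero (div_opow_log_lt x one_lt_omega0), add_zero]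

theorem subst_lt_apply_of_mem (hfE : ∀ e ∈ S, IsEpsilon (f e)) (hf : StrictMonoOn f S)
    {z : Ordinal} (hzS : z ∈ S)
    (hlog : ∀ x < z, Ep x ⊆ S → log ω (subst f x) = subst f (log ω x)) :
    ∀ x < z, Ep x ⊆ S → subst f x < f z := by
  intro x
  induction x using WellFoundedLT.induction with | _ x ih => ?_
  intro hxz hxS
  by_cases hx : IsEpsilon x
  · rw [hx.subst_eq]
    exact hf (hx.mem_of_Ep_subset hxS) hzS hxz
  rcases eq_or_ne x 0 with rfl | hx0
  · rw [subst_zero]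
    exact pos_iff_ne_zero.2 (hfE z hzS).ne_zero
  have hlt := log_omega0_lt_self hx0 hx
  rw [← show ω ^ f z = f z from hfE z hzS]
  refine lt_opow_of_log_lt one_lt_omega0 ?_
  rw [hlog x hxz hxS]
  exact ih _ hlt (hlt.trans hxz) ((Ep_log_subset x).trans hxS)

theorem subst_lt_of_not_isEpsilon (hfE : ∀ e ∈ S, IsEpsilon (f e)) {z : Ordinal}
    (hzS : Ep z ⊆ S) (hz0 : z ≠ 0) (hz : ¬IsEpsilon z)
    (hlogz : log ω (subst f z) = subst f (log ω z))
    (hlog : ∀ x < z, Ep x ⊆ S → log ω (subst f x) = subst f (log ω x))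
    (hmono : ∀ x < z, Ep x ⊆ S → ∀ y < x, Ep y ⊆ S → subst f y < subst f x) :
    ∀ x < z, Ep x ⊆ S → subst f x < subst f z := by
  intro x hxz hxS
  rcases eq_or_ne x 0 with rfl | hx0
  · rw [subst_zero]
    exact subst_pos hfE hzS hz0
  have hmono_log := hmono _ (log_omega0_lt_self hz0 hz) ((Ep_log_subset z).trans hzS)
  rcases (log_mono_right ω hxz.le).lt_or_eq with hlt | heq
  · refine lt_of_log_lt_log (b := ω) ?_
    rw [hlog x hxz hxS, hlogz]
    exact hmono_log _ hlt ((Ep_log_subset x).trans hxS)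
  have hrS := (Ep_mod_subset x).trans hxS
  have hr : x % ω ^ log ω x < ω ^ log ω x := mod_lt x (opow_ne_zero _ omega0_ne_zero)
  rw [subst_eq_omega0_opow_mul_add hfE hxS, subst_eq_omega0_opow_mul_add hfE hzS, heq]
  rw [heq] at hrS hr
  refine opow_mul_add_lt_opow_mul_add (subst_lt_omega0_opow_subst hrS hr
    (hlog _ (hr.trans_le (opow_log_le_self ω hz0)) hrS) hmono_log) ?_
  exact (div_lt_div_or_mod_lt hxz _).imp_right fun ⟨hc, hr'⟩ => ⟨hc,
    hmono _ (mod_opow_log_lt_self ω hz0) ((Ep_mod_subset z).trans hzS) _ hr' hrS⟩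

theorem log_subst_and_subst_lt (hfE : ∀ e ∈ S, IsEpsilon (f e)) (hf : StrictMonoOn f S)
    (z : Ordinal) (hzS : Ep z ⊆ S) :
    log ω (subst f z) = subst f (log ω z) ∧ ∀ x < z, Ep x ⊆ S → subst f x < subst f z := by
  induction z using WellFoundedLT.induction with | _ z ih => ?_
  have hlog := fun x hx hxS => (ih x hx hxS).1
  have hmono := fun x hx hxS => (ih x hx hxS).2
  by_cases hz : IsEpsilon z
  · exact ⟨log_subst_of_isEpsilon hfE hz hzS,
      hz.subst_eq f ▸ subst_lt_apply_of_mem hfE hf (hz.mem_of_Ep_subset hzS) hlog⟩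
  rcases eq_or_ne z 0 with rfl | hz0
  · exact ⟨by simp [subst_zero], fun _ hx => absurd hx zero_le.not_gt⟩
  have hlogz := log_subst_of_ne_zero hfE hzS hz0
    (hlog _ (mod_opow_log_lt_self ω hz0) ((Ep_mod_subset z).trans hzS))
    (hmono _ (log_omega0_lt_self hz0 hz) ((Ep_log_subset z).trans hzS))
  exact ⟨hlogz, subst_lt_of_not_isEpsilon hfE hzS hz0 hz hlogz hlog hmono⟩

theorem subst_strictMonoOn (hfE : ∀ e ∈ S, IsEpsilon (f e)) (hf : StrictMonoOn f S) :
    StrictMonoOn (subst f) {x | Ep x ⊆ S} :=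
  fun x hxS z hzS hxz => (log_subst_and_subst_lt hfE hf z hzS).2 x hxz hxS

theorem log_subst (hfE : ∀ e ∈ S, IsEpsilon (f e)) (hf : StrictMonoOn f S) (hxS : Ep x ⊆ S) :
    log ω (subst f x) = subst f (log ω x) :=
  (log_subst_and_subst_lt hfE hf x hxS).1

end Subst

theorem stmt19_general (S : Set Ordinal.{0}) (f : Ordinal → Ordinal)
    (hfE : ∀ e ∈ S, IsEpsilon (f e))
    (hf : StrictMonoOn f S)
    (y : Ordinal) (hy : Ep y ⊆ S) :
    ((0 < y ∧ Ordinal.Principal (· + ·) y) ∧ ¬ IsEpsilon y) ↔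
      ((0 < subst f y ∧ Ordinal.Principal (· + ·) (subst f y)) ∧
        ¬ IsEpsilon (subst f y)) := by
  by_cases hye : IsEpsilon y
  · simp only [hye, hye.subst_eq, hfE y (hye.mem_of_Ep_subset hy), not_true_eq_false, and_false]
  rcases eq_or_ne y 0 with rfl | hy0
  · simp [subst_zero]
  have hsy0 : subst f y ≠ 0 := (subst_pos hfE hy hy0).ne'
  have hsye : ¬IsEpsilon (subst f y) := fun h =>
    (subst_strictMonoOn hfE hf ((Ep_log_subset y).trans hy) hy (log_omega0_lt_self hy0 hye)).ne
      (by rw [← log_subst hfE hf hy, h.log_eq])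
  simp only [pos_iff_ne_zero, ne_eq, hy0, hsy0, hye, hsye, not_false_eq_true, true_and, and_true]
  change IsPrincipal _ y ↔ IsPrincipal _ (subst f y)
  rw [isPrincipal_add_iff_omega0_opow_log_eq hy0, isPrincipal_add_iff_omega0_opow_log_eq hsy0,
    log_subst hfE hf hy, omega0_opow_subst_log_eq_subst_iff hfE hy hy0]

theorem stmt19 (S : Set Ordinal.{0}) (f : Ordinal → Ordinal)
    (hS : ∀ e ∈ S, IsEpsilon e) (hfE : ∀ e ∈ S, IsEpsilon (f e))
    (hf : StrictMonoOn f S)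
    (y : Ordinal) (hy : Ep y ⊆ S) :
    ((0 < y ∧ Ordinal.Principal (· + ·) y) ∧ ¬ IsEpsilon y) ↔
      ((0 < subst f y ∧ Ordinal.Principal (· + ·) (subst f y)) ∧
        ¬ IsEpsilon (subst f y)) :=
  stmt19_general S f hfE hf y hy
end
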